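/- arXiv:1704.04385 — 4 statements merged into one kernel-verified Lean document; each statement's English description precedes it below -/
import Mathlib

section
/- Let k'/k be a finite purely inseparable field extension in characteristic p > 0, B = k' ⊗_k k', and let m be the kernel of the multiplication map B → k', b₁ ⊗ b₂ ↦ b₁b₂. Then m is a nilpotent ideal: there exists n with 1 ≤ n ≤ [k':k] such that m^n = 0. -/
open TensorProduct

/-!
Some power `x ^ p ^ e` of every `x ∈ k' ⊗[k] k'` lies in `k' ⊗ 1`; applying the multiplication
map shows that this power vanishes when `x ∈ m`, so `m` is a nil ideal and lies in the Jacobson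
radical. By Nakayama the powers of `m` then strictly decrease until they reach `0`, and as
`k'`-subspaces of the `[k':k]`-dimensional `k'`-space `k' ⊗[k] k'` they lose a dimension at each
step, whence `m ^ [k':k] = 0`.
-/

section

variable {K A : Type*} [Field K] [CommRing A] [Algebra K A] [FiniteDimensional K A]

theorem Ideal.finrank_pow_add_le_finrank {I : Ideal A} (hI : I ≤ Ideal.jacobson ⊥) {n : ℕ}
    (hn : n ≤ Module.finrank K A) :
    Module.finrank K ((I ^ n).restrictScalars K) + n ≤ Module.finrank K A := by
  induction n with
  | zero => simpa using Submodule.finrank_le ((I ^ 0).restrictScalars K)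
  | succ n ih =>
    have ih := ih (by omega)
    by_cases hstable : I ^ (n + 1) = I ^ n
    · have : IsNoetherianRing A := isNoetherian_of_tower K inferInstance
      have hbot : I ^ n = ⊥ := Submodule.eq_bot_of_le_smul_of_le_jacobson_bot I _
        (IsNoetherian.noetherian _) (by rw [Ideal.smul_eq_mul, ← pow_succ', hstable]) hI
      have hzero : Module.finrank K ((I ^ (n + 1)).restrictScalars K) = 0 :=
        Submodule.finrank_eq_zero.mpr (by rw [hstable, hbot, Submodule.restrictScalars_bot])
      omega
    · have hlt : (I ^ (n + 1)).restrictScalars K < (I ^ n).restrictScalars K :=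
        lt_of_le_of_ne (Ideal.pow_le_pow_right n.le_succ)
          (fun h => hstable (Submodule.restrictScalars_injective K _ _ h))
      have hdrop := Submodule.finrank_lt_finrank_of_lt hlt
      omega

theorem Ideal.pow_finrank_eq_bot {I : Ideal A} (hI : I ≤ Ideal.jacobson ⊥) :
    I ^ Module.finrank K A = ⊥ := by
  have h := Ideal.finrank_pow_add_le_finrank (K := K) hI le_rfl
  have h0 : (I ^ Module.finrank K A).restrictScalars K = ⊥ :=
    Submodule.finrank_eq_zero.mp (by omega)
  exact Submodule.restrictScalars_injective K _ _ h0

end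

theorem IsPurelyInseparable.ker_lmul'_le_nilradical {k K : Type*} [Field k] [Field K]
    [Algebra k K] [IsPurelyInseparable k K] :
    RingHom.ker (Algebra.TensorProduct.lmul' k (S := K)) ≤ nilradical (K ⊗[k] K) := by
  intro x hx
  rw [RingHom.mem_ker] at hx
  obtain ⟨n, hn, a, ha⟩ := IsPurelyInseparable.exists_pow_mem_range_tensorProduct (R := K) x
  have ha0 : a = 0 := by
    simpa [hx, hn.ne'] using congrArg (Algebra.TensorProduct.lmul' k (S := K)) ha
  exact mem_nilradical.mpr ⟨n, by rw [← ha, ha0, map_zero]⟩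

/-- For a finite purely inseparable extension `k'/k` in characteristic `p`, the kernel `m`
of the multiplication map `k' ⊗[k] k' → k'` is nilpotent, with `m ^ n = 0` for some
`1 ≤ n ≤ [k':k]`. -/
theorem stmt2 (k k' : Type*) [Field k] [Field k'] [Algebra k k'] (p : ℕ) [Fact p.Prime]
    [CharP k p] [FiniteDimensional k k']
    (hinsep : ∀ x : k', ∃ e : ℕ, x ^ p ^ e ∈ (algebraMap k k').range)
    (m : Ideal (k' ⊗[k] k'))
    (hm : m = RingHom.ker (Algebra.TensorProduct.lmul' k (S := k')).toRingHom) :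
    ∃ n : ℕ, 1 ≤ n ∧ n ≤ Module.finrank k k' ∧ m ^ n = ⊥ := by
  have : IsPurelyInseparable k k' := (isPurelyInseparable_iff_pow_mem k p).mpr hinsep
  have hrad : m ≤ Ideal.jacobson ⊥ := hm ▸
    IsPurelyInseparable.ker_lmul'_le_nilradical.trans Ideal.radical_le_jacobson
  refine ⟨Module.finrank k k', Module.finrank_pos, le_rfl, ?_⟩
  rw [← Module.finrank_baseChange (S := k) (R := k') (M' := k')]
  exact Ideal.pow_finrank_eq_bot hrad
end

section
/- Let B be a commutative ring and m an ideal of B with m^n = 0. Suppose there exist elements m, m₁, …, m_{n−2} ∈ m with m·m₁⋯m_{n−2} ≠ 0. Let z be the 2×2 upper unitriangular matrix with top-right entry m, and for 1 ≤ i ≤ n−2 let y_i = diag(1 + m_i, 1). Then the iterated commutator [y₁, [y₂, [⋯, [y_{n−2}, z]⋯]]] equals the upper unitriangular matrix with top-right entry m·m₁⋯m_{n−2}, and in particular is not the identity. -/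
open scoped commutatorElement

/-- Conjugating by `diag(1 + c, 1)` scales the top-right entry of a unitriangular matrix by
`1 + c`, so the commutator keeps only the increment `c * a`. -/
lemma commutator_diag_unitriangular_val {B : Type*} [CommRing B]
    (y w : (Matrix (Fin 2) (Fin 2) B)ˣ) (c a : B)
    (hy : (y : Matrix (Fin 2) (Fin 2) B) = !![1 + c, 0; 0, 1])
    (hw : (w : Matrix (Fin 2) (Fin 2) B) = !![1, a; 0, 1]) :
    ((⁅y, w⁆ : (Matrix (Fin 2) (Fin 2) B)ˣ) : Matrix (Fin 2) (Fin 2) B) =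
      !![1, c * a; 0, 1] := by
  rw [show ⁅y, w⁆ = y * w * (w * y)⁻¹ by group, Units.val_mul, Units.mul_inv_eq_iff_eq_mul]
  simp only [Units.val_mul, hy, hw]
  ext i j
  fin_cases i <;> fin_cases j <;> simp [Matrix.mul_apply, Fin.sum_univ_two]; ring

lemma foldr_commutator_diag_unitriangular_val {B : Type*} [CommRing B] (k : ℕ)
    (cs : Fin k → B) (ys : Fin k → (Matrix (Fin 2) (Fin 2) B)ˣ)
    (hys : ∀ i, (ys i : Matrix (Fin 2) (Fin 2) B) = !![1 + cs i, 0; 0, 1])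
    (a : B) (w : (Matrix (Fin 2) (Fin 2) B)ˣ)
    (hw : (w : Matrix (Fin 2) (Fin 2) B) = !![1, a; 0, 1]) :
    ((Fin.foldr k (fun i v => ⁅ys i, v⁆) w : (Matrix (Fin 2) (Fin 2) B)ˣ) :
      Matrix (Fin 2) (Fin 2) B) = !![1, a * ∏ i, cs i; 0, 1] := by
  induction k generalizing a w with
  | zero => simpa using hw
  | succ k ih =>
    rw [Fin.foldr_succ, commutator_diag_unitriangular_val _ _ (cs 0) _ (hys 0)
      (ih (fun i => cs i.succ) (fun i => ys i.succ) (fun i => hys i.succ) a w hw),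
      Fin.prod_univ_succ]
    ring_nf

theorem stmt5_general (B : Type*) [CommRing B] (n : ℕ)
    (m : B) (ms : Fin (n - 2) → B)
    (hne : m * ∏ i, ms i ≠ 0)
    (z : (Matrix (Fin 2) (Fin 2) B)ˣ)
    (hz : (z : Matrix (Fin 2) (Fin 2) B) = !![1, m; 0, 1])
    (ys : Fin (n - 2) → (Matrix (Fin 2) (Fin 2) B)ˣ)
    (hys : ∀ i, (ys i : Matrix (Fin 2) (Fin 2) B) = !![1 + ms i, 0; 0, 1]) :
    ((Fin.foldr (n - 2) (fun i w => ⁅ys i, w⁆) z : (Matrix (Fin 2) (Fin 2) B)ˣ) :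
        Matrix (Fin 2) (Fin 2) B) = !![1, m * ∏ i, ms i; 0, 1] ∧
      Fin.foldr (n - 2) (fun i w => ⁅ys i, w⁆) z ≠ 1 := by
  have hval := foldr_commutator_diag_unitriangular_val (n - 2) ms ys hys m z hz
  refine ⟨hval, fun hone => hne ?_⟩
  simpa [hone, eq_comm] using congrFun (congrFun hval 0) 1

/-- Explicit iterated commutator of unitriangular and diagonal congruence elements:
`[y₁,[y₂,[…,[y_{n-2}, z]…]]]` is unitriangular with top-right entry `m·m₁⋯m_{n-2}`. -/
theorem stmt5 (B : Type*) [CommRing B] (J : Ideal B) (n : ℕ) (hn : 2 ≤ n)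
    (hJ : J ^ n = ⊥)
    (m : B) (hm : m ∈ J) (ms : Fin (n - 2) → B) (hms : ∀ i, ms i ∈ J)
    (hne : m * ∏ i, ms i ≠ 0)
    (z : (Matrix (Fin 2) (Fin 2) B)ˣ)
    (hz : (z : Matrix (Fin 2) (Fin 2) B) = !![1, m; 0, 1])
    (ys : Fin (n - 2) → (Matrix (Fin 2) (Fin 2) B)ˣ)
    (hys : ∀ i, (ys i : Matrix (Fin 2) (Fin 2) B) = !![1 + ms i, 0; 0, 1]) :
    ((Fin.foldr (n - 2) (fun i w => ⁅ys i, w⁆) z : (Matrix (Fin 2) (Fin 2) B)ˣ) :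
        Matrix (Fin 2) (Fin 2) B) = !![1, m * ∏ i, ms i; 0, 1] ∧
      Fin.foldr (n - 2) (fun i w => ⁅ys i, w⁆) z ≠ 1 :=
  stmt5_general B n m ms hne z hz ys hys
end

section
/- Let B be a commutative ring of characteristic 2 and m̄ an ideal of B. Write ²m̄ for the ideal generated by squares of elements of m̄. For r ≥ 0 set J₀ = m̄, I₀ = m̄, and for r ≥ 1 set I_r = (²m̄)^r · m̄ and J_r = (²m̄)^{r−1} · m̄². Define R_r to be the set of 2×2 matrices ((1+m₁, m₂),(m₃, 1+m₄)) with m₁, m₄ ∈ J_r, m₂, m₃ ∈ I_r and determinant 1 (i.e. m₁ + m₄ + m₁m₄ + m₂m₃ = 0). Then each R_r is a subgroup of SL₂(B). -/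
open Matrix

/-! Everything rests on one ideal inclusion, `I * I ≤ J`. The off-diagonal entries of a product
`g * h` are sums of multiples of off-diagonal entries, so they stay in the ideal `I`. For a diagonal
entry, `a * a' - 1 = (a - 1) * a' + (a' - 1)` lies in `J`, and the cross term `b * c'` is a product
of two off-diagonal entries, hence lies in `I * I ≤ J`. Inverses are adjugates, which only permute
and negate entries. For `I_r = (²m̄)^r m̄` and `J_r = (²m̄)^(r-1) m̄²` the inclusion holds because
`(²m̄)^(2r) ≤ (²m̄)^(r-1)`. -/

theorem Ideal.mul_sub_one_mem {R : Type*} [CommRing R] {J : Ideal R} {a b : R}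
    (ha : a - 1 ∈ J) (hb : b - 1 ∈ J) : a * b - 1 ∈ J := by
  convert J.add_mem (J.mul_mem_right b ha) hb using 1
  ring

theorem Ideal.pow_succ_mul_mul_self_le {R : Type*} [CommRing R] (P M : Ideal R) (s : ℕ) :
    P ^ (s + 1) * M * (P ^ (s + 1) * M) ≤ P ^ s * M ^ 2 :=
  calc P ^ (s + 1) * M * (P ^ (s + 1) * M) = P ^ s * (P * P ^ (s + 1)) * M ^ 2 := by ring
    _ ≤ P ^ s * M ^ 2 := Ideal.mul_mono_left Ideal.mul_le_left

namespace Matrix.SpecialLinearGroup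

variable {R : Type*} [CommRing R]

theorem fin_two_mul_apply (g h : SpecialLinearGroup (Fin 2) R) (i j : Fin 2) :
    (g * h : SpecialLinearGroup (Fin 2) R) i j = g i 0 * h 0 j + g i 1 * h 1 j := by
  rw [coe_mul, mul_apply, Fin.sum_univ_two]

def ofIdeals (I J : Ideal R) (hIJ : I * I ≤ J) : Subgroup (SpecialLinearGroup (Fin 2) R) where
  carrier := {g | (g : Matrix (Fin 2) (Fin 2) R) 0 0 - 1 ∈ J ∧
    (g : Matrix (Fin 2) (Fin 2) R) 1 1 - 1 ∈ J ∧
    (g : Matrix (Fin 2) (Fin 2) R) 0 1 ∈ I ∧ (g : Matrix (Fin 2) (Fin 2) R) 1 0 ∈ I}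
  one_mem' := by simp
  mul_mem' := by
    rintro g h ⟨ha, hd, hb, hc⟩ ⟨ha', hd', hb', hc'⟩
    simp only [Set.mem_ofPred_eq, fin_two_mul_apply]
    refine ⟨?_, ?_, I.add_mem (I.mul_mem_left _ hb') (I.mul_mem_right _ hb),
      I.add_mem (I.mul_mem_right _ hc) (I.mul_mem_left _ hc')⟩
    · convert J.add_mem (Ideal.mul_sub_one_mem ha ha') (hIJ (Ideal.mul_mem_mul hb hc')) using 1
      ring
    · convert J.add_mem (Ideal.mul_sub_one_mem hd hd') (hIJ (Ideal.mul_mem_mul hc hb')) using 1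
      ring
  inv_mem' := by
    rintro g ⟨ha, hd, hb, hc⟩
    simp only [Set.mem_ofPred_eq, coe_inv, adjugate_fin_two]
    simpa using ⟨hd, ha, hb, hc⟩

end Matrix.SpecialLinearGroup

theorem stmt12_general (B : Type*) [CommRing B] (mbar : Ideal B)
    (sq : Ideal B)
    (I J : ℕ → Ideal B)
    (hI0 : I 0 = mbar) (hJ0 : J 0 = mbar)
    (hI : ∀ r : ℕ, 1 ≤ r → I r = sq ^ r * mbar)
    (hJ : ∀ r : ℕ, 1 ≤ r → J r = sq ^ (r - 1) * mbar ^ 2) :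
    ∀ r : ℕ, ∃ H : Subgroup (SpecialLinearGroup (Fin 2) B),
      (H : Set (SpecialLinearGroup (Fin 2) B)) =
        {g : SpecialLinearGroup (Fin 2) B |
          (g : Matrix (Fin 2) (Fin 2) B) 0 0 - 1 ∈ J r ∧
          (g : Matrix (Fin 2) (Fin 2) B) 1 1 - 1 ∈ J r ∧
          (g : Matrix (Fin 2) (Fin 2) B) 0 1 ∈ I r ∧
          (g : Matrix (Fin 2) (Fin 2) B) 1 0 ∈ I r} := by
  intro r
  have hIJ : I r * I r ≤ J r := by
    rcases r with _ | s
    · rw [hI0, hJ0]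
      exact Ideal.mul_le_left
    · rw [hI _ s.succ_pos, hJ _ s.succ_pos, Nat.succ_sub_one]
      exact Ideal.pow_succ_mul_mul_self_le sq mbar s
  exact ⟨SpecialLinearGroup.ofIdeals (I r) (J r) hIJ, rfl⟩

/-- Char 2: with `²m̄` the ideal generated by squares of elements of `m̄`,
`I_r = (²m̄)^r · m̄`, `J_r = (²m̄)^{r-1} · m̄²` (and `I₀ = J₀ = m̄`), the set `R_r` of
determinant-one matrices `(1+m₁, m₂; m₃, 1+m₄)` with `m₁, m₄ ∈ J_r`, `m₂, m₃ ∈ I_r`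
is a subgroup of `SL₂(B)`. -/
theorem stmt12 (B : Type*) [CommRing B] [CharP B 2] (mbar : Ideal B)
    (sq : Ideal B) (hsq : sq = Ideal.span ((fun x : B => x ^ 2) '' (mbar : Set B)))
    (I J : ℕ → Ideal B)
    (hI0 : I 0 = mbar) (hJ0 : J 0 = mbar)
    (hI : ∀ r : ℕ, 1 ≤ r → I r = sq ^ r * mbar)
    (hJ : ∀ r : ℕ, 1 ≤ r → J r = sq ^ (r - 1) * mbar ^ 2) :
    ∀ r : ℕ, ∃ H : Subgroup (SpecialLinearGroup (Fin 2) B),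
      (H : Set (SpecialLinearGroup (Fin 2) B)) =
        {g : SpecialLinearGroup (Fin 2) B |
          (g : Matrix (Fin 2) (Fin 2) B) 0 0 - 1 ∈ J r ∧
          (g : Matrix (Fin 2) (Fin 2) B) 1 1 - 1 ∈ J r ∧
          (g : Matrix (Fin 2) (Fin 2) B) 0 1 ∈ I r ∧
          (g : Matrix (Fin 2) (Fin 2) B) 1 0 ∈ I r} :=
  stmt12_general B mbar sq I J hI0 hJ0 hI hJ
end

section
/- Let k be a field of characteristic 2 and k' = k(s, t) a purely inseparable extension of degree 4 with s², t² ∈ k, s² ∉ k², t² ∉ k², and [k':k] = 4. In B = k' ⊗_k k', set m₁ = s ⊗ 1 + 1 ⊗ s and m₂ = t ⊗ 1 + 1 ⊗ t. Then m₁ m₂ ≠ 0, and consequently the unitriangular matrices u₁ = ((1, m₁),(0,1)) and u₂ = ((1, 0),(m₂, 1)) in GL₂(B) do not commute: u₁u₂ ≠ u₂u₁. -/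
open TensorProduct

/-- For `k' = k(s,t)` of degree 4 over a char-2 field `k` with `s², t² ∈ k`:
in `B = k' ⊗[k] k'` the elements `m₁ = s⊗1 + 1⊗s`, `m₂ = t⊗1 + 1⊗t` have `m₁ m₂ ≠ 0`,
so the corresponding unitriangular matrices in `GL₂(B)` fail to commute. -/
theorem stmt16 (k k' : Type*) [Field k] [Field k'] [Algebra k k'] [CharP k 2]
    (s t : k') (hs : s ^ 2 ∈ (algebraMap k k').range) (ht : t ^ 2 ∈ (algebraMap k k').range)
    (hgen : Algebra.adjoin k ({s, t} : Set k') = ⊤)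
    (hdeg : Module.finrank k k' = 4)
    (m₁ m₂ : k' ⊗[k] k')
    (hm₁ : m₁ = s ⊗ₜ[k] (1 : k') + (1 : k') ⊗ₜ[k] s)
    (hm₂ : m₂ = t ⊗ₜ[k] (1 : k') + (1 : k') ⊗ₜ[k] t) :
    m₁ * m₂ ≠ 0 ∧
    !![1, m₁; 0, 1] * !![1, 0; m₂, 1] ≠ !![1, 0; m₂, 1] * !![(1 : k' ⊗[k] k'), m₁; 0, 1] := by
  obtain ⟨a, ha⟩ := hs
  obtain ⟨c, hc⟩ := ht
  set v : Fin 4 → k' := ![1, s, t, s * t] with hv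
  have hmem : ∀ i, v i ∈ Submodule.span k (Set.range v) :=
    fun i => Submodule.subset_span ⟨i, rfl⟩
  have hspan : ⊤ ≤ Submodule.span k (Set.range v) := by
    have hmul : ∀ i j : Fin 4, v i * v j ∈ Submodule.span k (Set.range v) := by
      intro i j
      fin_cases i <;> fin_cases j <;> simp [hv]
      · exact Submodule.subset_span (by simp)
      · exact Submodule.subset_span (by simp)
      · exact Submodule.subset_span (by simp)
      · exact Submodule.subset_span (by simp)
      · exact Submodule.subset_span (by simp)
      · rw [show s * s = a • (1 : k') by rw [Algebra.smul_def, ha]; ring]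
        exact Submodule.smul_mem _ _ (Submodule.subset_span (by simp))
      · exact Submodule.subset_span (by simp)
      · rw [show s * (s * t) = a • t by rw [Algebra.smul_def, ha]; ring]
        exact Submodule.smul_mem _ _ (Submodule.subset_span (by simp))
      · exact Submodule.subset_span (by simp)
      · rw [mul_comm t s]
        exact Submodule.subset_span (by simp)
      · rw [show t * t = c • (1 : k') by rw [Algebra.smul_def, hc]; ring]
        exact Submodule.smul_mem _ _ (Submodule.subset_span (by simp))
      · rw [show t * (s * t) = c • s by rw [Algebra.smul_def, hc]; ring]
        exact Submodule.smul_mem _ _ (Submodule.subset_span (by simp))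
      · exact Submodule.subset_span (by simp)
      · rw [show s * t * s = a • t by rw [Algebra.smul_def, ha]; ring]
        exact Submodule.smul_mem _ _ (Submodule.subset_span (by simp))
      · rw [show s * t * t = c • s by rw [Algebra.smul_def, hc]; ring]
        exact Submodule.smul_mem _ _ (Submodule.subset_span (by simp))
      · rw [show s * t * (s * t) = (a * c) • (1 : k') by
          rw [Algebra.smul_def, map_mul, ha, hc]; ring]
        exact Submodule.smul_mem _ _ (Submodule.subset_span (by simp))
    have h1 : (1 : k') ∈ Submodule.span k (Set.range v) := by
      have := hmem 0; simpa [hv] using this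
    have hmul' : Submodule.span k (Set.range v) * Submodule.span k (Set.range v) ≤
        Submodule.span k (Set.range v) := by
      rw [Submodule.span_mul_span]
      refine Submodule.span_le.2 ?_
      rintro z ⟨x, ⟨i, rfl⟩, y, ⟨j, rfl⟩, rfl⟩
      exact hmul i j
    let S : Subalgebra k k' := Submodule.toSubalgebra (Submodule.span k (Set.range v)) h1
      (fun x y hx hy => hmul' (Submodule.mul_mem_mul hx hy))
    have hle : Algebra.adjoin k ({s, t} : Set k') ≤ S := by
      refine Algebra.adjoin_le ?_
      rintro x (rfl | rfl)
      · exact hmem 1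
      · exact hmem 2
    rw [hgen] at hle
    exact fun x _ => hle (by trivial : x ∈ (⊤ : Subalgebra k k'))
  have hcard : Fintype.card (Fin 4) = Module.finrank k k' := by simp [hdeg]
  let b : Module.Basis (Fin 4) k k' := basisOfTopLeSpanOfCardEqFinrank v hspan hcard
  have hb : ∀ i, b i = v i := fun i =>
    congrFun (coe_basisOfTopLeSpanOfCardEqFinrank v hspan hcard) i
  have h1b : (1 : k') = b 0 := by rw [hb]; simp [hv]
  have hsb : s = b 1 := by rw [hb]; simp [hv]
  have htb : t = b 2 := by rw [hb]; simp [hv]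
  have hstb : s * t = b 3 := by rw [hb]; simp [hv]
  have hprod : m₁ * m₂ = (s * t) ⊗ₜ[k] 1 + s ⊗ₜ[k] t + t ⊗ₜ[k] s + 1 ⊗ₜ[k] (s * t) := by
    rw [hm₁, hm₂, add_mul, mul_add, mul_add]
    simp only [Algebra.TensorProduct.tmul_mul_tmul, one_mul, mul_one]
    ring
  have hne : m₁ * m₂ ≠ 0 := by
    intro h0
    rw [hprod] at h0
    rw [hstb, hsb, htb, h1b] at h0
    have := congrArg (fun z => ((Module.Basis.tensorProduct b b).repr z) (1, 2)) h0
    simp [Module.Basis.tensorProduct_repr_tmul_apply, Finsupp.single_apply] at this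
  refine ⟨hne, ?_⟩
  intro h
  have h00 := congrFun (congrFun h 0) 0
  simp [Matrix.mul_apply, Fin.sum_univ_succ] at h00
  exact hne (by linear_combination h00)
end
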